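/- Let 0 < γ ≤ 4, 0 ≤ β ≤ 1, δ = (√γ/4)(√(12-3γ) - √γ), and p(x) = (1/2)e^{-|x|}. Then for every u ∈ H¹(ℝ) and every x ∈ ℝ: ((p + β p') * ((3-γ)/2 · u² + (γ/2) u'²))(x) ≥ δ u(x)², where p'(x) = -(sign x)(1/2)e^{-|x|} (defined for x ≠ 0). -/

import Mathlib

/-!
Since `δ` is a root of `δ² + (γ/2) δ = (γ/2)(3-γ)/2`, completing the square gives
`δ (a² ± 2ab) ≤ (3-γ)/2 a² + γ/2 b²`. As `(e^{y-x} u²)' = e^{y-x} (u² + 2uu')` and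
`u² → 0` at `-∞`, integrating over `y ≤ x` gives `δ u(x)² ≤ ∫_{y ≤ x} e^{y-x} F`, where `F` is
the integrand `(3-γ)/2 u² + γ/2 u'²`; symmetrically `δ u(x)² ≤ ∫_{y > x} e^{x-y} F`.
The kernel `p + βp'` at `x - y` is `(1-β)/2 e^{y-x}` for `y < x` and `(1+β)/2 e^{x-y}` for `y > x`,
so the convolution is a convex combination of these two integrals.
-/

open MeasureTheory Real

noncomputable def p (x : ℝ) : ℝ := (1/2) * Real.exp (-|x|)

noncomputable def p' (x : ℝ) : ℝ := -(Real.sign x) * (1/2) * Real.exp (-|x|)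

open Set Filter Topology

theorem mul_sq_add_two_mul_le {A c δ : ℝ} (hc : 0 < c) (hδ : δ ^ 2 + c * δ ≤ c * A) (a b : ℝ) :
    δ * (a ^ 2 + 2 * a * b) ≤ A * a ^ 2 + c * b ^ 2 := by
  refine le_of_mul_le_mul_left ?_ hc
  nlinarith [sq_nonneg (c * b - δ * a), mul_nonneg (sub_nonneg.2 hδ) (sq_nonneg a)]

theorem sq_add_mul_eq_of_eq_sqrt {γ δ : ℝ} (hγ0 : 0 ≤ γ) (hγ4 : γ ≤ 4)
    (hδ : δ = (√γ / 4) * (√(12 - 3 * γ) - √γ)) :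
    δ ^ 2 + γ / 2 * δ = γ / 2 * ((3 - γ) / 2) := by
  have hsq : √γ ^ 2 = γ := sq_sqrt hγ0
  have hprod : (√γ * √(12 - 3 * γ)) ^ 2 = γ * (12 - 3 * γ) := by
    rw [mul_pow, hsq, sq_sqrt (by linarith)]
  have hδ' : δ = (√γ * √(12 - 3 * γ) - γ) / 4 := by rw [hδ]; linear_combination (-1 / 4) * hsq
  rw [hδ']
  linear_combination (1 / 16) * hprod

theorem MeasureTheory.Integrable.integrableOn_Iic_exp_sub_mul {g : ℝ → ℝ} (hg : Integrable g)
    (x : ℝ) :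
    IntegrableOn (fun y => exp (y - x) * g y) (Iic x) := by
  refine hg.integrableOn.bdd_mul (c := 1) (by fun_prop) ?_
  refine ae_restrict_of_forall_mem measurableSet_Iic fun y (hy : y ≤ x) => ?_
  rw [norm_of_nonneg (exp_nonneg _), exp_le_one_iff]
  linarith

theorem MeasureTheory.Integrable.integrableOn_Ioi_exp_sub_mul {g : ℝ → ℝ} (hg : Integrable g)
    (x : ℝ) :
    IntegrableOn (fun y => exp (x - y) * g y) (Ioi x) := by
  refine hg.integrableOn.bdd_mul (c := 1) (by fun_prop) ?_
  refine ae_restrict_of_forall_mem measurableSet_Ioi fun y (hy : x < y) => ?_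
  rw [norm_of_nonneg (exp_nonneg _), exp_le_one_iff]
  linarith

section ExpWeight

variable {f f' : ℝ → ℝ} (hf : ∀ y, HasDerivAt f (f' y) y) (hfi : Integrable f)
  (hf'i : Integrable f') (x : ℝ)
include hf hfi hf'i

theorem integral_Iic_exp_sub_mul_add_deriv :
    ∫ y in Iic x, exp (y - x) * (f y + f' y) = f x := by
  have hderiv : ∀ y, HasDerivAt (fun t => exp (t - x) * f t) (exp (y - x) * (f y + f' y)) y := by
    intro y
    have he : HasDerivAt (fun t => exp (t - x)) (exp (y - x)) y := by
      simpa using ((hasDerivAt_id y).sub_const x).exp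
    exact (he.fun_mul (hf y)).congr_deriv (by ring)
  have hlim : Tendsto (fun t => exp (t - x) * f t) atBot (𝓝 0) := by
    have hexp : Tendsto (fun t => exp (t - x)) atBot (𝓝 0) :=
      tendsto_exp_atBot.comp (tendsto_atBot_add_const_right _ _ tendsto_id)
    simpa using hexp.mul
      (tendsto_zero_of_hasDerivAt_of_integrableOn_Iic (a := 0) (fun y _ => hf y)
        hf'i.integrableOn hfi.integrableOn)
  simpa using integral_Iic_of_hasDerivAt_of_tendsto (hderiv x).continuousAt.continuousWithinAt
    (fun y _ => hderiv y) ((hfi.add hf'i).integrableOn_Iic_exp_sub_mul x) hlim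

theorem integral_Ioi_exp_sub_mul_sub_deriv :
    ∫ y in Ioi x, exp (x - y) * (f y - f' y) = f x := by
  have hderiv :
      ∀ y, HasDerivAt (fun t => -(exp (x - t) * f t)) (exp (x - y) * (f y - f' y)) y := by
    intro y
    have he : HasDerivAt (fun t => exp (x - t)) (-exp (x - y)) y := by
      simpa using ((hasDerivAt_id y).const_sub x).exp
    exact (he.fun_mul (hf y)).fun_neg.congr_deriv (by ring)
  have hlim : Tendsto (fun t => -(exp (x - t) * f t)) atTop (𝓝 0) := by
    have hexp : Tendsto (fun t => exp (x - t)) atTop (𝓝 0) :=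
      tendsto_exp_atBot.comp (tendsto_atBot_add_const_left _ _ tendsto_neg_atTop_atBot)
    simpa using (hexp.mul
      (tendsto_zero_of_hasDerivAt_of_integrableOn_Ioi (a := 0) (fun y _ => hf y)
        hf'i.integrableOn hfi.integrableOn)).neg
  simpa using integral_Ioi_of_hasDerivAt_of_tendsto (hderiv x).continuousAt.continuousWithinAt
    (fun y _ => hderiv y) ((hfi.sub hf'i).integrableOn_Ioi_exp_sub_mul x) hlim

theorem le_integral_Iic_exp_sub_mul {G : ℝ → ℝ} (hG : Integrable G)
    (hle : ∀ y, f y + f' y ≤ G y) : f x ≤ ∫ y in Iic x, exp (y - x) * G y :=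
  calc f x = ∫ y in Iic x, exp (y - x) * (f y + f' y) :=
        (integral_Iic_exp_sub_mul_add_deriv hf hfi hf'i x).symm
    _ ≤ ∫ y in Iic x, exp (y - x) * G y :=
        setIntegral_mono ((hfi.add hf'i).integrableOn_Iic_exp_sub_mul x)
          (hG.integrableOn_Iic_exp_sub_mul x)
          fun y => mul_le_mul_of_nonneg_left (hle y) (exp_nonneg _)

theorem le_integral_Ioi_exp_sub_mul {G : ℝ → ℝ} (hG : Integrable G)
    (hle : ∀ y, f y - f' y ≤ G y) : f x ≤ ∫ y in Ioi x, exp (x - y) * G y :=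
  calc f x = ∫ y in Ioi x, exp (x - y) * (f y - f' y) :=
        (integral_Ioi_exp_sub_mul_sub_deriv hf hfi hf'i x).symm
    _ ≤ ∫ y in Ioi x, exp (x - y) * G y :=
        setIntegral_mono ((hfi.sub hf'i).integrableOn_Ioi_exp_sub_mul x)
          (hG.integrableOn_Ioi_exp_sub_mul x)
          fun y => mul_le_mul_of_nonneg_left (hle y) (exp_nonneg _)

end ExpWeight

theorem p_add_mul_p'_of_pos (β : ℝ) {t : ℝ} (ht : 0 < t) :
    p t + β * p' t = (1 - β) / 2 * exp (-t) := by
  simp only [p, p', sign_of_pos ht, abs_of_pos ht]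
  ring

theorem p_add_mul_p'_of_neg (β : ℝ) {t : ℝ} (ht : t < 0) :
    p t + β * p' t = (1 + β) / 2 * exp t := by
  simp only [p, p', sign_of_neg ht, abs_of_neg ht, neg_neg]
  ring

theorem integral_p_add_mul_p'_mul (β x : ℝ) {F : ℝ → ℝ} (hF : Integrable F) :
    ∫ y, (p (x - y) + β * p' (x - y)) * F y =
      (1 - β) / 2 * (∫ y in Iic x, exp (y - x) * F y)
        + (1 + β) / 2 * ∫ y in Ioi x, exp (x - y) * F y := by
  have hleft : EqOn (fun y => (p (x - y) + β * p' (x - y)) * F y)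
      (fun y => (1 - β) / 2 * (exp (y - x) * F y)) (Iio x) := fun y (hy : y < x) => by
    simp only [p_add_mul_p'_of_pos β (sub_pos.2 hy), neg_sub, mul_assoc]
  have hright : EqOn (fun y => (p (x - y) + β * p' (x - y)) * F y)
      (fun y => (1 + β) / 2 * (exp (x - y) * F y)) (Ioi x) := fun y (hy : x < y) => by
    simp only [p_add_mul_p'_of_neg β (sub_neg.2 hy), mul_assoc]
  have hint_left : IntegrableOn (fun y => (p (x - y) + β * p' (x - y)) * F y) (Iic x) :=
    (integrableOn_Iic_iff_integrableOn_Iio enorm_ne_top).2 <|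
      IntegrableOn.congr_fun
        (((hF.integrableOn_Iic_exp_sub_mul x).mono_set Iio_subset_Iic_self).const_mul _)
        hleft.symm measurableSet_Iio
  have hint_right : IntegrableOn (fun y => (p (x - y) + β * p' (x - y)) * F y) (Ioi x) :=
    IntegrableOn.congr_fun ((hF.integrableOn_Ioi_exp_sub_mul x).const_mul _) hright.symm
      measurableSet_Ioi
  rw [← intervalIntegral.integral_Iic_add_Ioi hint_left hint_right, integral_Iic_eq_integral_Iio,
    integral_Iic_eq_integral_Iio, setIntegral_congr_fun measurableSet_Iio hleft,
    setIntegral_congr_fun measurableSet_Ioi hright, integral_const_mul, integral_const_mul]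

theorem kernel_plus_inequality
    (γ β : ℝ) (hγ0 : 0 < γ) (hγ4 : γ ≤ 4) (hβ0 : 0 ≤ β) (hβ1 : β ≤ 1)
    (δ : ℝ) (hδ : δ = (Real.sqrt γ / 4) * (Real.sqrt (12 - 3*γ) - Real.sqrt γ))
    (u : ℝ → ℝ) (hu : Differentiable ℝ u)
    (hu2 : MemLp u 2 volume) (hu'2 : MemLp (deriv u) 2 volume) :
    ∀ x : ℝ,
      (∫ y, (p (x - y) + β * p' (x - y)) * ((3 - γ)/2 * u y^2 + (γ/2) * deriv u y^2))
        ≥ δ * u x^2 := by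
  intro x
  have hpoint (a b : ℝ) : δ * (a ^ 2 + 2 * a * b) ≤ (3 - γ) / 2 * a ^ 2 + γ / 2 * b ^ 2 :=
    mul_sq_add_two_mul_le (by linarith) (sq_add_mul_eq_of_eq_sqrt hγ0.le hγ4 hδ).le a b
  have hF : Integrable fun y => (3 - γ) / 2 * u y ^ 2 + γ / 2 * deriv u y ^ 2 :=
    (hu2.integrable_sq.const_mul _).add (hu'2.integrable_sq.const_mul _)
  have hf (y : ℝ) : HasDerivAt (fun t => δ * u t ^ 2) (δ * (2 * u y * deriv u y)) y := by
    simpa using ((hu y).hasDerivAt.pow 2).const_mul δ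
  have hfi : Integrable fun y => δ * u y ^ 2 := hu2.integrable_sq.const_mul δ
  have hf'i : Integrable fun y => δ * (2 * u y * deriv u y) := by
    simpa [mul_assoc] using ((hu2.integrable_mul hu'2).const_mul 2).const_mul δ
  have hleft := le_integral_Iic_exp_sub_mul hf hfi hf'i x hF fun y => by
    linear_combination hpoint (u y) (deriv u y)
  have hright := le_integral_Ioi_exp_sub_mul hf hfi hf'i x hF fun y => by
    linear_combination hpoint (u y) (-deriv u y)
  rw [ge_iff_le, integral_p_add_mul_p'_mul β x hF]
  linarith [mul_le_mul_of_nonneg_left hleft (by linarith : 0 ≤ (1 - β) / 2),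
    mul_le_mul_of_nonneg_left hright (by linarith : 0 ≤ (1 + β) / 2)]
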